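/- Let d, R ∈ ℕ with R ≥ 1, let C_0, …, C_R be d×d complex matrices such that z ↦ det(Σ_{n=0}^R z^{R−n} C_n) is not identically zero, and let γ : ℕ → ℂ^d be a bounded sequence satisfying Σ_{n=0}^R C_n · γ(r+n) = 0 for all r ∈ ℕ. Then no component of γ exhibits power-law decay: for every index j, every real s > 0, and every c ∈ ℂ, if r^s · γ(r)_j → c as r → ∞ then c = 0. -/

import Mathlib

/-!
Each component `γⱼ` of a solution satisfies the scalar recurrence `p(S) γⱼ = 0`, where `S` is the
shift and `p = det (∑ₙ Xⁿ Cₙ)` (multiply the vector recurrence by the adjugate); `p ≠ 0` because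
the reversed pencil is regular. Write `p = (X - 1)ᵐ q` with `q(1) ≠ 0`. If `rˢ γⱼ(r) → c`, then
`rˢ (q(S) γⱼ)(r) → q(1) c`, so `u = q(S) γⱼ` tends to `0` when `s > 0`. A sequence tending to `0`
and annihilated by `(S - 1)ᵐ` vanishes, so `u = 0` and therefore `q(1) c = 0`.
-/

open Polynomial Filter Finset Topology

theorem Matrix.apply_det_apply_eq_zero_of_forall_sum_eq_zero {ι K A M : Type*} [Fintype ι]
    [DecidableEq ι] [CommRing K] [Semiring A] [AddCommMonoid M] [Module A M]
    (f : K →+* Module.End A M) (P : Matrix ι ι K) {v : ι → M}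
    (h : ∀ i, ∑ j, f (P i j) (v j) = 0) (i : ι) : f P.det (v i) = 0 := by
  -- `f` turns `P` into an endomorphism `Φ P` of `Mⁿ` killing `v`; apply `adj P * P = det P • 1`.
  let Φ := (endVecRingEquivMatrixEnd ι A M).symm.toRingHom.comp f.mapMatrix
  have hΦ : ∀ Q : Matrix ι ι K, Φ Q v i = ∑ j, f (Q i j) (v j) := fun _ => rfl
  have hP : Φ P v = 0 := funext h
  have key := congrFun (congrArg (fun g => g v) (congrArg Φ P.adjugate_mul)) i
  simp only [map_mul, Module.End.mul_apply, hP, map_zero] at key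
  rw [hΦ, Finset.sum_eq_single i (fun j _ hj => by simp [Matrix.one_apply_ne' hj]) (by simp)]
    at key
  simpa using key.symm

section Shift
variable {R M : Type*}

variable (R M) in
def seqShift [Semiring R] [AddCommMonoid M] [Module R M] : Module.End R (ℕ → M) where
  toFun v r := v (r + 1)
  map_add' _ _ := rfl
  map_smul' _ _ := rfl

@[simp]
theorem seqShift_apply [Semiring R] [AddCommMonoid M] [Module R M] (v : ℕ → M) (r : ℕ) :
    seqShift R M v r = v (r + 1) :=
  rfl

theorem seqShift_pow_apply [Semiring R] [AddCommMonoid M] [Module R M] (k : ℕ) (v : ℕ → M)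
    (r : ℕ) : (seqShift R M ^ k) v r = v (r + k) := by
  induction k generalizing r with
  | zero => rfl
  | succ k ih =>
    rw [pow_succ', Module.End.mul_apply, seqShift_apply, ih, add_right_comm, add_assoc]

theorem aeval_seqShift_apply [CommSemiring R] [AddCommMonoid M] [Module R M] (p : R[X])
    (v : ℕ → M) (r : ℕ) :
    aeval (seqShift R M) p v r = ∑ i ∈ range (p.natDegree + 1), p.coeff i • v (r + i) := by
  simp [aeval_eq_sum_range, seqShift_pow_apply]

theorem eq_zero_of_sub_one_pow_apply_eq_zero_of_tendsto [Ring R] [AddCommGroup M] [Module R M]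
    [TopologicalSpace M] [IsTopologicalAddGroup M] [T2Space M] {u : ℕ → M} (m : ℕ)
    (h : ((seqShift R M - 1) ^ m) u = 0) (hu : Tendsto u atTop (𝓝 0)) : u = 0 := by
  induction m generalizing u with
  | zero => simpa using h
  | succ m ih =>
    have hdiff : (seqShift R M - 1) u = 0 := by
      refine ih (by rwa [← Module.End.mul_apply, ← pow_succ]) ?_
      have hsub := (hu.comp (tendsto_add_atTop_nat 1)).sub hu
      rwa [sub_zero] at hsub
    have hconst : u = fun _ => u 0 := by
      funext r
      induction r with
      | zero => rfl
      | succ r ihr => rw [← ihr, ← sub_eq_zero]; exact congrFun hdiff r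
    have h0 : u 0 = 0 :=
      tendsto_nhds_unique (tendsto_const_nhds.congr fun r => (congrFun hconst r).symm) hu
    rw [hconst, h0]
    rfl
end Shift

section PowerLaw
variable {v : ℕ → ℂ} {s : ℝ} {c : ℂ}

theorem tendsto_zero_of_tendsto_rpow_mul (hs : 0 < s)
    (h : Tendsto (fun r : ℕ => (((r : ℝ) ^ s : ℝ) : ℂ) * v r) atTop (𝓝 c)) :
    Tendsto v atTop (𝓝 0) := by
  have hinv : Tendsto (fun r : ℕ => ((((r : ℝ) ^ s)⁻¹ : ℝ) : ℂ)) atTop (𝓝 0) := by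
    simpa [Function.comp_def] using (Complex.continuous_ofReal.tendsto 0).comp
      ((tendsto_rpow_atTop hs).comp tendsto_natCast_atTop_atTop).inv_tendsto_atTop
  refine (zero_mul c ▸ hinv.mul h).congr' ?_
  filter_upwards [eventually_gt_atTop 0] with r hr
  have : (((r : ℝ) ^ s : ℝ) : ℂ) ≠ 0 := by norm_cast; positivity
  push_cast
  field_simp

theorem tendsto_rpow_mul_comp_add
    (h : Tendsto (fun r : ℕ => (((r : ℝ) ^ s : ℝ) : ℂ) * v r) atTop (𝓝 c)) (i : ℕ) :
    Tendsto (fun r : ℕ => (((r : ℝ) ^ s : ℝ) : ℂ) * v (r + i)) atTop (𝓝 c) := by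
  have hratio : Tendsto (fun r : ℕ => ((((r : ℝ) / (r + i)) ^ s : ℝ) : ℂ)) atTop (𝓝 1) := by
    have := ((Real.continuousAt_rpow_const 1 s (Or.inl one_ne_zero)).tendsto.comp
      (tendsto_natCast_div_add_atTop (i : ℝ)))
    simpa [Function.comp_def] using (Complex.continuous_ofReal.tendsto _).comp this
  refine (one_mul c ▸ hratio.mul (h.comp (tendsto_add_atTop_nat i))).congr' ?_
  filter_upwards [eventually_gt_atTop 0] with r hr
  have : ((((r + i : ℕ) : ℝ) ^ s : ℝ) : ℂ) ≠ 0 := by norm_cast; positivity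
  simp only [Function.comp_apply]
  rw [Real.div_rpow (by positivity) (by positivity)]
  push_cast at this ⊢
  field_simp

theorem tendsto_rpow_mul_aeval_seqShift_apply
    (h : Tendsto (fun r : ℕ => (((r : ℝ) ^ s : ℝ) : ℂ) * v r) atTop (𝓝 c)) (q : ℂ[X]) :
    Tendsto (fun r : ℕ => (((r : ℝ) ^ s : ℝ) : ℂ) * aeval (seqShift ℂ ℂ) q v r) atTop
      (𝓝 (q.eval 1 * c)) := by
  simp only [aeval_seqShift_apply, smul_eq_mul, Finset.mul_sum, mul_left_comm _ (q.coeff _)]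
  rw [eval_eq_sum_range, Finset.sum_mul]
  exact tendsto_finsetSum _ fun i _ => by
    simpa using (tendsto_rpow_mul_comp_add h i).const_mul (q.coeff i)

theorem eq_zero_of_aeval_seqShift_eq_zero_of_tendsto_rpow_mul {p : ℂ[X]} (hp : p ≠ 0)
    (hv : aeval (seqShift ℂ ℂ) p v = 0) (hs : 0 < s)
    (h : Tendsto (fun r : ℕ => (((r : ℝ) ^ s : ℝ) : ℂ) * v r) atTop (𝓝 c)) : c = 0 := by
  obtain ⟨m, q, hpq, hq1⟩ : ∃ m q, p = (X - Polynomial.C 1) ^ m * q ∧ q.eval 1 ≠ 0 :=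
    ⟨_, _, (pow_mul_divByMonic_rootMultiplicity_eq p 1).symm,
      eval_divByMonic_pow_rootMultiplicity_ne_zero 1 hp⟩
  have hlim := tendsto_rpow_mul_aeval_seqShift_apply h q
  have hqv : aeval (seqShift ℂ ℂ) q v = 0 := by
    refine eq_zero_of_sub_one_pow_apply_eq_zero_of_tendsto (R := ℂ) m ?_
      (tendsto_zero_of_tendsto_rpow_mul hs hlim)
    rw [← hv, hpq, map_mul, Module.End.mul_apply]
    simp
  simp only [hqv, Pi.zero_apply, mul_zero] at hlim
  exact (mul_eq_zero.mp (tendsto_nhds_unique tendsto_const_nhds hlim).symm).resolve_left hq1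
end PowerLaw

theorem Polynomial.exists_ne_zero_eval_ne_zero {K : Type*} [Field K] [Infinite K] {Q : K[X]}
    (hQ : Q ≠ 0) : ∃ z ≠ 0, Q.eval z ≠ 0 := by
  by_contra! h
  refine mul_ne_zero X_ne_zero hQ (zero_of_eval_zero _ fun z => ?_)
  by_cases hz : z = 0
  · simp [hz]
  · simp [h z hz]

section Pencil
variable {ι K : Type*} [Fintype ι]

theorem Matrix.eval_det_sum_X_pow_smul_map_C [DecidableEq ι] [CommRing K] {κ : Type*}
    [Fintype κ] (e : κ → ℕ) (C : κ → Matrix ι ι K) (z : K) :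
    (∑ n, (X : K[X]) ^ e n • (C n).map Polynomial.C).det.eval z = (∑ n, z ^ e n • C n).det := by
  rw [← coe_evalRingHom, RingHom.map_det, RingHom.mapMatrix_apply]
  congr 1
  ext i j
  simp only [Matrix.map_apply, Matrix.sum_apply, Matrix.smul_apply, coe_evalRingHom,
    eval_finsetSum, smul_eq_mul, eval_mul, eval_pow, eval_X, eval_C]

theorem sum_pow_sub_smul_eq_pow_smul_sum_inv_pow_smul {M : Type*} [Field K] [AddCommGroup M]
    [Module K M] {R : ℕ} {z : K} (hz : z ≠ 0) (A : Fin (R + 1) → M) :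
    ∑ n : Fin (R + 1), z ^ (R - n : ℕ) • A n = z ^ R • ∑ n : Fin (R + 1), z⁻¹ ^ (n : ℕ) • A n := by
  rw [Finset.smul_sum]
  refine Finset.sum_congr rfl fun n _ => ?_
  rw [smul_smul, inv_pow, pow_sub₀ z hz (Nat.le_of_lt_succ n.isLt)]

variable {R : ℕ}

noncomputable def pencil [CommSemiring K] (C : Fin (R + 1) → Matrix ι ι K) : Matrix ι ι K[X] :=
  ∑ n : Fin (R + 1), (X : K[X]) ^ (n : ℕ) • (C n).map Polynomial.C

theorem det_pencil_ne_zero [DecidableEq ι] [Field K] [Infinite K]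
    {C : Fin (R + 1) → Matrix ι ι K}
    (hreg : ∃ z : K, (∑ n : Fin (R + 1), z ^ (R - (n : ℕ)) • C n).det ≠ 0) :
    (pencil C).det ≠ 0 := by
  -- At `z ≠ 0` the reversed pencil is `z ^ R` times the pencil at `z⁻¹`, and the reversed
  -- determinant, a nonzero polynomial, is nonzero at some `z ≠ 0`.
  obtain ⟨z₀, hz₀⟩ := hreg
  set Q := (∑ n : Fin (R + 1), (X : K[X]) ^ (R - (n : ℕ)) • (C n).map Polynomial.C).det with hQ
  have hQz₀ : Q.eval z₀ ≠ 0 := by rwa [hQ, Matrix.eval_det_sum_X_pow_smul_map_C]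
  obtain ⟨z, hz0, hz⟩ :=
    exists_ne_zero_eval_ne_zero (Q := Q) fun h => hQz₀ (by rw [h, eval_zero])
  rw [hQ, Matrix.eval_det_sum_X_pow_smul_map_C, sum_pow_sub_smul_eq_pow_smul_sum_inv_pow_smul hz0,
    Matrix.det_smul, ← Matrix.eval_det_sum_X_pow_smul_map_C (fun n : Fin (R + 1) => (n : ℕ))]
    at hz
  intro hP
  exact hz (by rw [← pencil, hP, eval_zero, mul_zero])

theorem sum_aeval_pencil_apply [CommRing K] (C : Fin (R + 1) → Matrix ι ι K) (γ : ℕ → ι → K)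
    (i : ι) (r : ℕ) :
    ∑ j, aeval (seqShift K K) (pencil C i j) (fun r => γ r j) r
      = (∑ n : Fin (R + 1), (C n).mulVec (γ (r + n))) i := by
  simp only [pencil, Matrix.sum_apply, Matrix.smul_apply, Matrix.map_apply, map_sum,
    LinearMap.coe_sum, Finset.sum_apply, smul_eq_mul, mul_comm (X ^ _), map_mul, aeval_C,
    map_pow, aeval_X, Module.End.mul_apply, Module.algebraMap_end_apply, Pi.smul_apply,
    seqShift_pow_apply, Matrix.mulVec, dotProduct]
  exact Finset.sum_comm

theorem aeval_det_pencil_eq_zero [DecidableEq ι] [CommRing K] {C : Fin (R + 1) → Matrix ι ι K}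
    {γ : ℕ → ι → K} (hrec : ∀ r, ∑ n : Fin (R + 1), (C n).mulVec (γ (r + n)) = 0) (j : ι) :
    aeval (seqShift K K) (pencil C).det (fun r => γ r j) = 0 :=
  Matrix.apply_det_apply_eq_zero_of_forall_sum_eq_zero (aeval (seqShift K K)).toRingHom
    (pencil C) (fun i => by
      ext r
      rw [Finset.sum_apply]
      exact (sum_aeval_pencil_apply C γ i r).trans (congrFun (hrec r) i)) j
end Pencil

theorem matrix_difference_bounded_solution_no_power_law_general
    (d R : ℕ)
    (C : Fin (R + 1) → Matrix (Fin d) (Fin d) ℂ)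
    (hreg : ∃ z : ℂ, (∑ n : Fin (R + 1), z ^ (R - (n : ℕ)) • C n).det ≠ 0)
    (γ : ℕ → (Fin d → ℂ))
    (hrec : ∀ r : ℕ, ∑ n : Fin (R + 1), (C n).mulVec (γ (r + n)) = 0) :
    ∀ j : Fin d, ∀ s : ℝ, 0 < s → ∀ c : ℂ,
      Filter.Tendsto (fun r : ℕ => (((r : ℝ) ^ s : ℝ) : ℂ) * γ r j) Filter.atTop (nhds c) →
      c = 0 := by
  intro j s hs c hlim
  exact eq_zero_of_aeval_seqShift_eq_zero_of_tendsto_rpow_mul (det_pencil_ne_zero hreg)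
    (aeval_det_pencil_eq_zero hrec j) hs hlim

/-- Proposition 1: a bounded solution `γ` of a matrix difference equation
`∑ₙ Cₙ γ(r+n) = 0` with regular matrix pencil cannot follow a power-law decay:
if `r^s γ(r)ⱼ → c` for some `s > 0`, then `c = 0`. -/
theorem matrix_difference_bounded_solution_no_power_law
    (d R : ℕ) (hR : 1 ≤ R)
    (C : Fin (R + 1) → Matrix (Fin d) (Fin d) ℂ)
    (hreg : ∃ z : ℂ, (∑ n : Fin (R + 1), z ^ (R - (n : ℕ)) • C n).det ≠ 0)
    (γ : ℕ → (Fin d → ℂ))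
    (hbdd : ∃ M : ℝ, ∀ r : ℕ, ‖γ r‖ ≤ M)
    (hrec : ∀ r : ℕ, ∑ n : Fin (R + 1), (C n).mulVec (γ (r + n)) = 0) :
    ∀ j : Fin d, ∀ s : ℝ, 0 < s → ∀ c : ℂ,
      Filter.Tendsto (fun r : ℕ => (((r : ℝ) ^ s : ℝ) : ℂ) * γ r j) Filter.atTop (nhds c) →
      c = 0 :=
  matrix_difference_bounded_solution_no_power_law_general d R C hreg γ hrec
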